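/- arXiv:2508.15051 — 5 statements merged into one kernel-verified Lean document; each statement's English description precedes it below -/
import Mathlib

section
/- Let n, d ≥ 1, r > 0, λ ∈ [0,1]^n, and let P be a probability measure on ℝ^d supported in the closed Euclidean ball of radius r centered at the origin. Let Z₁,…,Zₙ be a λ-contaminated sample of P. Then for every weight vector w ∈ Δₙ, E[‖Σᵢ wᵢZᵢ − μ_P‖₂²] ≤ 7r²(‖w‖₂² + 3(wᵀλ)²). -/
open MeasureTheory ProbabilityTheory

noncomputable section

/-- The family of codomain types used to express the mutual independence of the clean samples
`X₁,…,Xₙ` (valued in `E`) and the Bernoulli contamination indicators `B₁,…,Bₙ` (valued in `ℝ`). -/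
abbrev MixFam (E : Type) (n : ℕ) : Fin n ⊕ Fin n → Type
  | .inl _ => E
  | .inr _ => ℝ

def mixMS (E : Type) [MeasurableSpace E] (n : ℕ) :
    ∀ j : Fin n ⊕ Fin n, MeasurableSpace (MixFam E n j)
  | .inl _ => (inferInstance : MeasurableSpace E)
  | .inr _ => (inferInstance : MeasurableSpace ℝ)

def mixFun {Ω : Type*} {E : Type} {n : ℕ} (X : Fin n → Ω → E) (B : Fin n → Ω → ℝ) :
    ∀ j : Fin n ⊕ Fin n, Ω → MixFam E n j
  | .inl i => X i
  | .inr i => B i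

/-- `Z₁,…,Zₙ` is a `λ`-contaminated sample of `P` (a measure on a normed space `E`,
supported in the ball of radius `r`): there are clean i.i.d. samples `Xᵢ ∼ P`, Bernoulli
variables `Bᵢ` with `P(Bᵢ = 1) = λᵢ`, mutually independent of the `Xᵢ`'s, and arbitrary
(measurable) outliers `X̃ᵢ` with `‖X̃ᵢ‖ ≤ r` a.s., such that
`Zᵢ = (1 − Bᵢ)Xᵢ + BᵢX̃ᵢ`. -/
def IsContamSample {Ω : Type*} {E : Type} [MeasurableSpace Ω] [MeasurableSpace E]
    [NormedAddCommGroup E] [NormedSpace ℝ E]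
    (Pr : Measure Ω) {n : ℕ} (P : Measure E) (r : ℝ) (lam : Fin n → ℝ)
    (X Xt : Fin n → Ω → E) (B : Fin n → Ω → ℝ) (Z : Fin n → Ω → E) : Prop :=
  (∀ i, Measurable (X i)) ∧ (∀ i, Measurable (B i)) ∧ (∀ i, Measurable (Xt i)) ∧
  (∀ i, Measure.map (X i) Pr = P) ∧
  (∀ i ω, B i ω = 0 ∨ B i ω = 1) ∧
  (∀ i, Pr {ω | B i ω = 1} = ENNReal.ofReal (lam i)) ∧
  iIndepFun (m := mixMS E n) (mixFun X B) Pr ∧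
  (∀ i, ∀ᵐ ω ∂Pr, ‖Xt i ω‖ ≤ r) ∧
  (∀ i ω, Z i ω = (1 - B i ω) • X i ω + (B i ω) • Xt i ω)

/-!
Write `∑ wᵢ Zᵢ - μ = A + C` with `A = ∑ wᵢ Xᵢ - μ` and `C = ∑ wᵢ Bᵢ (X̃ᵢ - Xᵢ)`. Then
`‖C‖ ≤ 2r W` with `W = ∑ wᵢ Bᵢ`, and `(a + b)² ≤ 3/2 a² + 3 b²`. Variances of sums of pairwise
independent variables add, so, coordinatewise, `E‖A‖² ≤ r² ‖w‖²`, while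
`E W² = Var W + (E W)² ≤ ‖w‖²/4 + (wᵀλ)²` by Popoviciu's inequality for the `Bᵢ ∈ [0, 1]`.
Altogether `E‖∑ wᵢ Zᵢ - μ‖² ≤ 9/2 r² ‖w‖² + 12 r² (wᵀλ)²`.
-/

section WeightedSums

variable {Ω ι : Type*} [MeasurableSpace Ω] {Pr : Measure Ω} [Fintype ι]

lemma variance_weighted_sum {Y : ι → Ω → ℝ} (hY : ∀ i, MemLp (Y i) 2 Pr)
    (hind : Pairwise fun i j => Y i ⟂ᵢ[Pr] Y j) (w : ι → ℝ) :
    Var[fun ω => ∑ i, w i * Y i ω; Pr] = ∑ i, w i ^ 2 * Var[Y i; Pr] := by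
  have h := IndepFun.variance_sum (μ := Pr) (X := fun i ω => w i * Y i ω) (s := Finset.univ)
    (fun i _ => (hY i).const_mul (w i))
    (fun i _ j _ hij => (hind hij).comp (measurable_const_mul (w i)) (measurable_const_mul (w j)))
  simpa only [Finset.sum_fn, variance_const_mul] using h

lemma integral_sq_weighted_sum_le [IsProbabilityMeasure Pr] {B : ι → Ω → ℝ}
    (hB : ∀ i, AEMeasurable (B i) Pr) (hB01 : ∀ i, ∀ᵐ ω ∂Pr, B i ω ∈ Set.Icc 0 1)
    (hind : Pairwise fun i j => B i ⟂ᵢ[Pr] B j) (w : ι → ℝ) :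
    ∫ ω, (∑ i, w i * B i ω) ^ 2 ∂Pr ≤
      (∑ i, w i ^ 2) / 4 + (∑ i, w i * ∫ ω, B i ω ∂Pr) ^ 2 := by
  have hL2 i : MemLp (B i) 2 Pr := memLp_of_bounded (hB01 i) (hB i).aestronglyMeasurable 2
  have hvar : ∑ i, w i ^ 2 * Var[B i; Pr] ≤ (∑ i, w i ^ 2) / 4 := by
    rw [Finset.sum_div]
    refine Finset.sum_le_sum fun i _ => ?_
    have := variance_le_sq_of_bounded (hB01 i) (hB i)
    nlinarith [sq_nonneg (w i)]
  have hmean : ∫ ω, ∑ i, w i * B i ω ∂Pr = ∑ i, w i * ∫ ω, B i ω ∂Pr := by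
    rw [integral_finsetSum _ fun i _ => ((hL2 i).integrable one_le_two).const_mul (w i)]
    simp only [integral_const_mul]
  have := variance_eq_sub (memLp_finsetSum Finset.univ fun i _ => (hL2 i).const_mul (w i))
  rw [variance_weighted_sum hL2 hind w, hmean] at this
  simp only [Pi.pow_apply] at this
  linarith

variable {κ : Type*} [Fintype κ]

lemma integral_norm_sub_integral_sq_eq_sum_variance [IsFiniteMeasure Pr]
    {V : Ω → EuclideanSpace ℝ κ} (hV : MemLp V 2 Pr) :
    ∫ ω, ‖V ω - ∫ ω', V ω' ∂Pr‖ ^ 2 ∂Pr = ∑ k, Var[fun ω => V ω k; Pr] := by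
  have hcoord k : MemLp (fun ω => V ω k) 2 Pr := hV.eval_piLp k
  have hint k : Integrable (fun ω => V ω k) Pr := (hcoord k).integrable one_le_two
  simp_rw [EuclideanSpace.real_norm_sq_eq, PiLp.sub_apply, eval_integral_piLp hint]
  have hsq k : Integrable (fun ω => (V ω k - ∫ ω', V ω' k ∂Pr) ^ 2) Pr :=
    ((hcoord k).sub (memLp_const _)).integrable_sq
  rw [integral_finsetSum _ fun k _ => hsq k]
  exact Finset.sum_congr rfl fun k _ => (variance_eq_integral (hcoord k).aemeasurable).symm

lemma sum_variance_le_integral_norm_sq [IsProbabilityMeasure Pr] {V : Ω → EuclideanSpace ℝ κ}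
    (hV : MemLp V 2 Pr) :
    ∑ k, Var[fun ω => V ω k; Pr] ≤ ∫ ω, ‖V ω‖ ^ 2 ∂Pr := by
  have hcoord k : MemLp (fun ω => V ω k) 2 Pr := hV.eval_piLp k
  simp_rw [EuclideanSpace.real_norm_sq_eq]
  rw [integral_finsetSum _ fun k _ => (hcoord k).integrable_sq]
  exact Finset.sum_le_sum fun k _ => variance_le_expectation_sq (hcoord k).aestronglyMeasurable

lemma integral_norm_weighted_sum_sub_sq_le [IsProbabilityMeasure Pr]
    {X : ι → Ω → EuclideanSpace ℝ κ} (hX : ∀ i, MemLp (X i) 2 Pr)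
    (hind : Pairwise fun i j => X i ⟂ᵢ[Pr] X j) (w : ι → ℝ) :
    ∫ ω, ‖∑ i, w i • X i ω - ∫ ω', ∑ i, w i • X i ω' ∂Pr‖ ^ 2 ∂Pr ≤
      ∑ i, w i ^ 2 * ∫ ω, ‖X i ω‖ ^ 2 ∂Pr := by
  have hcoord i k : MemLp (fun ω => X i ω k) 2 Pr := (hX i).eval_piLp k
  have hind_coord k : Pairwise fun i j => (fun ω => X i ω k) ⟂ᵢ[Pr] (fun ω => X j ω k) :=
    fun i j hij => (hind hij).comp (φ := fun x : EuclideanSpace ℝ κ => x k)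
      (ψ := fun x : EuclideanSpace ℝ κ => x k) (by fun_prop) (by fun_prop)
  have hsum : MemLp (fun ω => ∑ i, w i • X i ω) 2 Pr :=
    memLp_finsetSum Finset.univ fun i _ => (hX i).const_smul (w i)
  rw [integral_norm_sub_integral_sq_eq_sum_variance hsum]
  calc ∑ k, Var[fun ω => (∑ i, w i • X i ω) k; Pr]
      = ∑ k, ∑ i, w i ^ 2 * Var[fun ω => X i ω k; Pr] := by
        refine Finset.sum_congr rfl fun k _ => ?_
        rw [← variance_weighted_sum (fun i => hcoord i k) (hind_coord k)]
        simp only [WithLp.ofLp_sum, WithLp.ofLp_smul, Finset.sum_apply, Pi.smul_apply,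
          smul_eq_mul]
    _ = ∑ i, w i ^ 2 * ∑ k, Var[fun ω => X i ω k; Pr] := by
        rw [Finset.sum_comm]; simp only [Finset.mul_sum]
    _ ≤ ∑ i, w i ^ 2 * ∫ ω, ‖X i ω‖ ^ 2 ∂Pr := by
        gcongr with i
        exact sum_variance_le_integral_norm_sq (hX i)

end WeightedSums

namespace IsContamSample

section NormedSpace

variable {Ω : Type*} {E : Type} [MeasurableSpace Ω] [MeasurableSpace E] [NormedAddCommGroup E]
  [NormedSpace ℝ E] {Pr : Measure Ω} {n : ℕ} {P : Measure E} {r : ℝ} {lam : Fin n → ℝ}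
  {X Xt : Fin n → Ω → E} {B : Fin n → Ω → ℝ} {Z : Fin n → Ω → E}

lemma pairwise_indepFun_clean (h : IsContamSample Pr P r lam X Xt B Z) :
    Pairwise fun i j => X i ⟂ᵢ[Pr] X j :=
  fun _ _ hij => h.2.2.2.2.2.2.1.indepFun (Sum.inl_injective.ne hij)

lemma pairwise_indepFun_bernoulli (h : IsContamSample Pr P r lam X Xt B Z) :
    Pairwise fun i j => B i ⟂ᵢ[Pr] B j :=
  fun _ _ hij => h.2.2.2.2.2.2.1.indepFun (Sum.inr_injective.ne hij)

lemma bernoulli_mem_Icc (h : IsContamSample Pr P r lam X Xt B Z) (i : Fin n) (ω : Ω) :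
    B i ω ∈ Set.Icc 0 1 := by
  rcases h.2.2.2.2.1 i ω with h0 | h1 <;> simp [*]

lemma memLp_bernoulli [IsFiniteMeasure Pr] (h : IsContamSample Pr P r lam X Xt B Z)
    (p : ENNReal) (i : Fin n) : MemLp (B i) p Pr :=
  memLp_of_bounded (ae_of_all _ (h.bernoulli_mem_Icc i)) (h.2.1 i).aestronglyMeasurable p

lemma integral_bernoulli (h : IsContamSample Pr P r lam X Xt B Z) {i : Fin n}
    (hlam : 0 ≤ lam i) : ∫ ω, B i ω ∂Pr = lam i := by
  obtain ⟨-, hBm, -, -, hB01, hBlam, -⟩ := h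
  have hB : B i = (B i ⁻¹' {1}).indicator 1 := by
    ext ω
    rcases hB01 i ω with h0 | h1 <;> simp [*]
  rw [hB, integral_indicator_one (hBm i (measurableSet_singleton 1)), measureReal_def,
    ← ENNReal.toReal_ofReal hlam, ← hBlam i]
  rfl

lemma integral_sq_weighted_bernoulli_le [IsProbabilityMeasure Pr]
    (h : IsContamSample Pr P r lam X Xt B Z) (hlam : ∀ i, 0 ≤ lam i) (w : Fin n → ℝ) :
    ∫ ω, (∑ i, w i * B i ω) ^ 2 ∂Pr ≤ (∑ i, w i ^ 2) / 4 + (∑ i, w i * lam i) ^ 2 := by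
  simpa only [h.integral_bernoulli (hlam _)] using
    integral_sq_weighted_sum_le (fun i => (h.2.1 i).aemeasurable)
      (fun i => ae_of_all _ (h.bernoulli_mem_Icc i)) h.pairwise_indepFun_bernoulli w

lemma ae_norm_clean_le (h : IsContamSample Pr P r lam X Xt B Z) (hP : ∀ᵐ x ∂P, ‖x‖ ≤ r)
    (i : Fin n) : ∀ᵐ ω ∂Pr, ‖X i ω‖ ≤ r := by
  rw [← h.2.2.2.1 i] at hP
  exact ae_of_ae_map (h.1 i).aemeasurable hP

lemma memLp_clean [OpensMeasurableSpace E] [SecondCountableTopology E] [IsFiniteMeasure Pr]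
    (h : IsContamSample Pr P r lam X Xt B Z)
    (hP : ∀ᵐ x ∂P, ‖x‖ ≤ r) (p : ENNReal) (i : Fin n) : MemLp (X i) p Pr :=
  .of_bound (h.1 i).aestronglyMeasurable r (h.ae_norm_clean_le hP i)

lemma integral_norm_clean_sq_le [IsProbabilityMeasure Pr]
    (h : IsContamSample Pr P r lam X Xt B Z) (hP : ∀ᵐ x ∂P, ‖x‖ ≤ r) (i : Fin n) :
    ∫ ω, ‖X i ω‖ ^ 2 ∂Pr ≤ r ^ 2 :=
  calc ∫ ω, ‖X i ω‖ ^ 2 ∂Pr ≤ ∫ _, r ^ 2 ∂Pr :=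
        integral_mono_of_nonneg (ae_of_all _ fun _ => by positivity) (integrable_const _)
          ((h.ae_norm_clean_le hP i).mono fun _ hX => pow_le_pow_left₀ (norm_nonneg _) hX 2)
    _ = r ^ 2 := by simp

lemma integral_clean [OpensMeasurableSpace E] [SecondCountableTopology E]
    (h : IsContamSample Pr P r lam X Xt B Z) (i : Fin n) :
    ∫ ω, X i ω ∂Pr = ∫ x, x ∂P := by
  rw [← h.2.2.2.1 i]
  exact (integral_map (h.1 i).aemeasurable aestronglyMeasurable_id).symm

lemma norm_weighted_sum_sub_le (h : IsContamSample Pr P r lam X Xt B Z) {w : Fin n → ℝ}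
    (hw : ∀ i, 0 ≤ w i) (m : E) {ω : Ω} (hX : ∀ i, ‖X i ω‖ ≤ r) (hXt : ∀ i, ‖Xt i ω‖ ≤ r) :
    ‖∑ i, w i • Z i ω - m‖ ≤ ‖∑ i, w i • X i ω - m‖ + 2 * r * ∑ i, w i * B i ω := by
  have hterm i : w i • Z i ω = w i • X i ω + (w i * B i ω) • (Xt i ω - X i ω) := by
    rw [h.2.2.2.2.2.2.2.2 i ω]
    module
  have hsplit : ∑ i, w i • Z i ω - m =
      (∑ i, w i • X i ω - m) + ∑ i, (w i * B i ω) • (Xt i ω - X i ω) := by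
    simp only [hterm, Finset.sum_add_distrib]
    abel
  rw [hsplit, Finset.mul_sum]
  refine (norm_add_le _ _).trans (add_le_add_right ((norm_sum_le _ _).trans
    (Finset.sum_le_sum fun i _ => ?_)) _)
  have hwB : 0 ≤ w i * B i ω := mul_nonneg (hw i) (h.bernoulli_mem_Icc i ω).1
  rw [norm_smul, Real.norm_of_nonneg hwB]
  calc w i * B i ω * ‖Xt i ω - X i ω‖ ≤ w i * B i ω * (r + r) :=
        mul_le_mul_of_nonneg_left ((norm_sub_le _ _).trans (add_le_add (hXt i) (hX i))) hwB
    _ = 2 * r * (w i * B i ω) := by ring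

lemma ae_norm_weighted_sum_sub_sq_le (h : IsContamSample Pr P r lam X Xt B Z)
    (hP : ∀ᵐ x ∂P, ‖x‖ ≤ r) {w : Fin n → ℝ} (hw : ∀ i, 0 ≤ w i) (m : E) :
    ∀ᵐ ω ∂Pr, ‖∑ i, w i • Z i ω - m‖ ^ 2 ≤
      3 / 2 * ‖∑ i, w i • X i ω - m‖ ^ 2 + 12 * r ^ 2 * (∑ i, w i * B i ω) ^ 2 := by
  filter_upwards [ae_all_iff.2 (h.ae_norm_clean_le hP), ae_all_iff.2 h.2.2.2.2.2.2.2.1]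
    with ω hX hXt
  have hle := h.norm_weighted_sum_sub_le hw m hX hXt
  nlinarith [norm_nonneg (∑ i, w i • Z i ω - m),
    sq_nonneg (‖∑ i, w i • X i ω - m‖ - 4 * r * ∑ i, w i * B i ω)]

end NormedSpace

lemma integral_norm_weighted_clean_sub_sq_le {Ω : Type*} {κ : Type} [Fintype κ] [MeasurableSpace Ω]
    {Pr : Measure Ω} [IsProbabilityMeasure Pr] {n : ℕ} {P : Measure (EuclideanSpace ℝ κ)}
    {r : ℝ} {lam : Fin n → ℝ} {X Xt Z : Fin n → Ω → EuclideanSpace ℝ κ} {B : Fin n → Ω → ℝ}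
    (h : IsContamSample Pr P r lam X Xt B Z) (hP : ∀ᵐ x ∂P, ‖x‖ ≤ r) {w : Fin n → ℝ}
    (hw : ∑ i, w i = 1) :
    ∫ ω, ‖∑ i, w i • X i ω - ∫ x, x ∂P‖ ^ 2 ∂Pr ≤ r ^ 2 * ∑ i, w i ^ 2 := by
  have hmean : ∫ ω, ∑ i, w i • X i ω ∂Pr = ∫ x, x ∂P := by
    rw [integral_finsetSum (f := fun i ω => w i • X i ω) Finset.univ
      fun i _ => ((h.memLp_clean hP 1 i).integrable le_rfl).smul (w i)]
    simp only [integral_smul, h.integral_clean, ← Finset.sum_smul, hw, one_smul]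
  calc ∫ ω, ‖∑ i, w i • X i ω - ∫ x, x ∂P‖ ^ 2 ∂Pr
      ≤ ∑ i, w i ^ 2 * ∫ ω, ‖X i ω‖ ^ 2 ∂Pr := by
        simpa only [hmean] using
          integral_norm_weighted_sum_sub_sq_le (h.memLp_clean hP 2) h.pairwise_indepFun_clean w
    _ ≤ ∑ i, w i ^ 2 * r ^ 2 := by gcongr with i; exact h.integral_norm_clean_sq_le hP i
    _ = r ^ 2 * ∑ i, w i ^ 2 := by rw [Finset.mul_sum]; simp only [mul_comm]

end IsContamSample

theorem bounded_mean_estimation_upper_bound_general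
    (n d : ℕ) (r : ℝ)
    (lam : Fin n → ℝ) (hlam : ∀ i, lam i ∈ Set.Icc (0:ℝ) 1)
    (P : Measure (EuclideanSpace ℝ (Fin d)))
    (hP : ∀ᵐ x ∂P, ‖x‖ ≤ r)
    {Ω : Type*} [MeasurableSpace Ω] (Pr : Measure Ω) [IsProbabilityMeasure Pr]
    (X Xt : Fin n → Ω → EuclideanSpace ℝ (Fin d)) (B : Fin n → Ω → ℝ)
    (Z : Fin n → Ω → EuclideanSpace ℝ (Fin d))
    (hsample : IsContamSample Pr P r lam X Xt B Z)
    (w : Fin n → ℝ) (hw : w ∈ stdSimplex ℝ (Fin n)) :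
    ∫ ω, ‖(∑ i, w i • Z i ω) - ∫ x, x ∂P‖^2 ∂Pr ≤
      7 * r^2 * ((∑ i, (w i)^2) + 3 * (∑ i, w i * lam i)^2) := by
  set s := ∑ i, w i ^ 2
  set t := ∑ i, w i * lam i
  have hA : Integrable (fun ω => ‖∑ i, w i • X i ω - ∫ x, x ∂P‖ ^ 2) Pr :=
    ((memLp_finsetSum Finset.univ fun i _ => (hsample.memLp_clean hP 2 i).const_smul (w i)).sub
      (memLp_const _)).integrable_norm_pow two_ne_zero
  have hW : Integrable (fun ω => (∑ i, w i * B i ω) ^ 2) Pr :=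
    (memLp_finsetSum Finset.univ fun i _ =>
      (hsample.memLp_bernoulli 2 i).const_mul (w i)).integrable_sq
  calc ∫ ω, ‖∑ i, w i • Z i ω - ∫ x, x ∂P‖ ^ 2 ∂Pr
      ≤ ∫ ω, 3 / 2 * ‖∑ i, w i • X i ω - ∫ x, x ∂P‖ ^ 2 +
          12 * r ^ 2 * (∑ i, w i * B i ω) ^ 2 ∂Pr :=
        integral_mono_of_nonneg (ae_of_all _ fun _ => by positivity)
          ((hA.const_mul _).add (hW.const_mul _)) (hsample.ae_norm_weighted_sum_sub_sq_le hP hw.1 _)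
    _ = 3 / 2 * ∫ ω, ‖∑ i, w i • X i ω - ∫ x, x ∂P‖ ^ 2 ∂Pr +
          12 * r ^ 2 * ∫ ω, (∑ i, w i * B i ω) ^ 2 ∂Pr := by
        rw [integral_add (hA.const_mul _) (hW.const_mul _), integral_const_mul,
          integral_const_mul]
    _ ≤ 3 / 2 * (r ^ 2 * s) + 12 * r ^ 2 * (s / 4 + t ^ 2) := by
        gcongr
        · exact hsample.integral_norm_weighted_clean_sub_sq_le hP hw.2
        · exact hsample.integral_sq_weighted_bernoulli_le (fun i => (hlam i).1) w
    _ ≤ 7 * r ^ 2 * (s + 3 * t ^ 2) := by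
        have hs : 0 ≤ s := Finset.sum_nonneg fun i _ => sq_nonneg (w i)
        nlinarith [sq_nonneg r, sq_nonneg t]

/-- for a `λ`-contaminated sample of a distribution `P` on `ℝ^d` supported in
the ball of radius `r`, every simplex-weighted linear estimator satisfies
`E[‖Σᵢ wᵢZᵢ − μ_P‖² ] ≤ 7r²(‖w‖₂² + 3(wᵀλ)²)`. -/
theorem bounded_mean_estimation_upper_bound
    (n d : ℕ) (hn : 1 ≤ n) (hd : 1 ≤ d) (r : ℝ) (hr : 0 < r)
    (lam : Fin n → ℝ) (hlam : ∀ i, lam i ∈ Set.Icc (0:ℝ) 1)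
    (P : Measure (EuclideanSpace ℝ (Fin d))) [IsProbabilityMeasure P]
    (hP : ∀ᵐ x ∂P, ‖x‖ ≤ r)
    {Ω : Type*} [MeasurableSpace Ω] (Pr : Measure Ω) [IsProbabilityMeasure Pr]
    (X Xt : Fin n → Ω → EuclideanSpace ℝ (Fin d)) (B : Fin n → Ω → ℝ)
    (Z : Fin n → Ω → EuclideanSpace ℝ (Fin d))
    (hsample : IsContamSample Pr P r lam X Xt B Z)
    (w : Fin n → ℝ) (hw : w ∈ stdSimplex ℝ (Fin n)) :
    ∫ ω, ‖(∑ i, w i • Z i ω) - ∫ x, x ∂P‖^2 ∂Pr ≤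
      7 * r^2 * ((∑ i, (w i)^2) + 3 * (∑ i, w i * lam i)^2) :=
  bounded_mean_estimation_upper_bound_general n d r lam hlam P hP Pr X Xt B Z hsample w hw
end
end

section
/- Let n ≥ 1, c > 0 and λ ∈ [0,1]^n. The function w ↦ ‖w‖₂² + c(wᵀλ)² has a unique minimizer w* over the probability simplex Δₙ, and there exists β ∈ ℝ such that for every i ∈ {1,…,n}, w*ᵢ = max(β − c(w*ᵀλ)λᵢ, 0). -/
/-!
The objective `Q` is a quadratic form, so `Q (w + t d) = Q w + 2t ⟨d, g w⟩ + t² Q d` where `g` is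
half its gradient. At a minimizer `w` over a convex set, letting `t → 0⁺` gives the variational
inequality `⟨v - w, g w⟩ ≥ 0`; taking `t = 1` then gives `Q v ≥ Q w + ‖v - w‖²`, hence uniqueness.
Testing the variational inequality on the vertices of the simplex shows `g_j ≥ β := ⟨w, g w⟩` for
every `j`; as `⟨w, g w - β⟩ = 0`, complementary slackness yields `w_i = max (β - c (wᵀλ) λ_i) 0`.
-/

/-- The objective `‖w‖₂² + c(wᵀλ)²`. -/
def obj {n : ℕ} (c : ℝ) (lam w : Fin n → ℝ) : ℝ :=
  (∑ i, (w i) ^ 2) + c * (∑ i, w i * lam i) ^ 2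

open Filter Topology Finset

theorem nonneg_of_forall_Ioc_mul_add_sq_mul_nonneg {a b : ℝ}
    (h : ∀ t ∈ Set.Ioc (0 : ℝ) 1, 0 ≤ t * a + t ^ 2 * b) : 0 ≤ a := by
  have hlim : Tendsto (fun t : ℝ => a + t * b) (𝓝[>] 0) (𝓝 a) := by
    have : Continuous (fun t : ℝ => a + t * b) := by fun_prop
    simpa using (this.tendsto 0).mono_left nhdsWithin_le_nhds
  refine ge_of_tendsto hlim ?_
  filter_upwards [Ioc_mem_nhdsGT zero_lt_one] with t ht
  have := h t ht
  nlinarith [ht.1]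

section Fintype

variable {ι : Type*} [Fintype ι]

theorem eq_max_sub_of_forall_sum_mul_le {w g : ι → ℝ} (hw : w ∈ stdSimplex ℝ ι)
    (hg : ∀ j, ∑ i, w i * g i ≤ g j) (i : ι) :
    w i = max (w i + ∑ j, w j * g j - g i) 0 := by
  set β := ∑ j, w j * g j
  have hslack : ∑ j, w j * (g j - β) = 0 := by
    simp only [mul_sub, sum_sub_distrib, ← sum_mul, hw.2, one_mul, β, sub_self]
  have hi : w i * (g i - β) = 0 :=
    (sum_eq_zero_iff_of_nonneg fun j _ => mul_nonneg (hw.1 j) (sub_nonneg.2 (hg j))).1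
      hslack i (mem_univ i)
  rcases mul_eq_zero.1 hi with h0 | hβ
  · rw [h0, zero_add, max_eq_right (sub_nonpos.2 (hg i))]
  · rw [sub_eq_zero.1 hβ, add_sub_cancel_right, max_eq_left (hw.1 i)]

end Fintype

variable {n : ℕ} (c : ℝ) (lam : Fin n → ℝ)

/-- Half the gradient of `obj c lam` at `w`. -/
def objGrad (w : Fin n → ℝ) : Fin n → ℝ := fun i => w i + c * (∑ j, w j * lam j) * lam i

theorem continuous_obj : Continuous (obj c lam) := by
  unfold obj; fun_prop

theorem sum_sq_le_obj {c : ℝ} (hc : 0 ≤ c) (d : Fin n → ℝ) : ∑ i, d i ^ 2 ≤ obj c lam d :=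
  le_add_of_nonneg_right (mul_nonneg hc (sq_nonneg _))

theorem obj_add_smul (w d : Fin n → ℝ) (t : ℝ) :
    obj c lam (w + t • d) =
      obj c lam w + t * (2 * ∑ i, d i * objGrad c lam w i) + t ^ 2 * obj c lam d := by
  have hsq : ∑ i, (w i + t * d i) ^ 2 =
      ∑ i, w i ^ 2 + 2 * t * ∑ i, d i * w i + t ^ 2 * ∑ i, d i ^ 2 := by
    simp only [mul_sum, ← sum_add_distrib]
    exact sum_congr rfl fun i _ => by ring
  have hlin : ∑ i, (w i + t * d i) * lam i = ∑ i, w i * lam i + t * ∑ i, d i * lam i := by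
    simp only [mul_sum, ← sum_add_distrib]
    exact sum_congr rfl fun i _ => by ring
  have hgrad : ∑ i, d i * objGrad c lam w i =
      ∑ i, d i * w i + c * (∑ i, w i * lam i) * ∑ i, d i * lam i := by
    simp only [objGrad, mul_sum, ← sum_add_distrib]
    exact sum_congr rfl fun i _ => by ring
  simp only [obj, Pi.add_apply, Pi.smul_apply, smul_eq_mul, hsq, hlin, hgrad]
  ring

theorem IsMinOn.sum_sub_mul_objGrad_nonneg {s : Set (Fin n → ℝ)} {w v : Fin n → ℝ}
    (hmin : IsMinOn (obj c lam) s w) (hs : Convex ℝ s) (hw : w ∈ s) (hv : v ∈ s) :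
    0 ≤ ∑ i, (v i - w i) * objGrad c lam w i := by
  suffices 0 ≤ 2 * ∑ i, (v - w) i * objGrad c lam w i by simpa using this
  refine nonneg_of_forall_Ioc_mul_add_sq_mul_nonneg (b := obj c lam (v - w)) fun t ht => ?_
  have hmem : w + t • (v - w) ∈ s := hs.add_smul_sub_mem hw hv ⟨ht.1.le, ht.2⟩
  have := hmin hmem
  rw [Set.mem_ofPred_eq, obj_add_smul] at this
  linarith

theorem IsMinOn.eq_of_obj_le {c : ℝ} (hc : 0 ≤ c) {s : Set (Fin n → ℝ)} {w v : Fin n → ℝ}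
    (hmin : IsMinOn (obj c lam) s w) (hs : Convex ℝ s) (hw : w ∈ s) (hv : v ∈ s)
    (hle : obj c lam v ≤ obj c lam w) : v = w := by
  have hexp := obj_add_smul c lam w (v - w) 1
  rw [one_smul, add_sub_cancel, one_pow, one_mul, one_mul] at hexp
  have hfirst := hmin.sum_sub_mul_objGrad_nonneg c lam hs hw hv
  have hsq : ∑ i, (v - w) i ^ 2 ≤ 0 := by
    have := sum_sq_le_obj lam hc (v - w)
    simp only [Pi.sub_apply] at hexp this ⊢
    linarith
  have hzero := (sum_eq_zero_iff_of_nonneg fun i _ => sq_nonneg ((v - w) i)).1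
    (le_antisymm hsq (sum_nonneg fun i _ => sq_nonneg _))
  funext i
  exact sub_eq_zero.1 (pow_eq_zero_iff two_ne_zero |>.1 (hzero i (mem_univ i)))

theorem eq_max_of_isMinOn_obj_stdSimplex {w : Fin n → ℝ}
    (hmin : IsMinOn (obj c lam) (stdSimplex ℝ (Fin n)) w) (hw : w ∈ stdSimplex ℝ (Fin n))
    (i : Fin n) :
    w i = max (∑ j, w j * objGrad c lam w j - c * (∑ j, w j * lam j) * lam i) 0 := by
  have hvertex (j : Fin n) : ∑ i, w i * objGrad c lam w i ≤ objGrad c lam w j := by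
    have := hmin.sum_sub_mul_objGrad_nonneg c lam (convex_stdSimplex ℝ _) hw
      (single_mem_stdSimplex ℝ j)
    simpa [sub_mul, sum_sub_distrib, Pi.single_apply] using this
  convert eq_max_sub_of_forall_sum_mul_le hw hvertex i using 2
  simp only [objGrad]
  ring

theorem unique_minimizer_on_simplex_general (n : ℕ) (hn : 1 ≤ n) (c : ℝ) (hc : 0 < c)
    (lam : Fin n → ℝ) :
    ∃ w : Fin n → ℝ, w ∈ stdSimplex ℝ (Fin n) ∧
      (∀ v ∈ stdSimplex ℝ (Fin n), obj c lam w ≤ obj c lam v) ∧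
      (∀ v ∈ stdSimplex ℝ (Fin n),
        (∀ u ∈ stdSimplex ℝ (Fin n), obj c lam v ≤ obj c lam u) → v = w) ∧
      ∃ β : ℝ, ∀ i, w i = max (β - c * (∑ j, w j * lam j) * lam i) 0 := by
  have : NeZero n := ⟨by omega⟩
  obtain ⟨w, hw, hmin⟩ := (isCompact_stdSimplex ℝ (Fin n)).exists_isMinOn
    ⟨_, single_mem_stdSimplex ℝ 0⟩ (continuous_obj c lam).continuousOn
  refine ⟨w, hw, hmin, fun v hv hvmin => ?_, _, eq_max_of_isMinOn_obj_stdSimplex c lam hmin hw⟩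
  exact hmin.eq_of_obj_le lam hc.le (convex_stdSimplex ℝ _) hw hv (hvmin w hw)

/-- the function `w ↦ ‖w‖₂² + c(wᵀλ)²` has a unique minimizer `w*` over the
probability simplex `Δₙ`, and there is a `β ∈ ℝ` with `w*ᵢ = max (β − c(w*ᵀλ)λᵢ) 0` for all `i`. -/
theorem unique_minimizer_on_simplex (n : ℕ) (hn : 1 ≤ n) (c : ℝ) (hc : 0 < c)
    (lam : Fin n → ℝ) (hlam : ∀ i, lam i ∈ Set.Icc (0:ℝ) 1) :
    ∃ w : Fin n → ℝ, w ∈ stdSimplex ℝ (Fin n) ∧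
      (∀ v ∈ stdSimplex ℝ (Fin n), obj c lam w ≤ obj c lam v) ∧
      (∀ v ∈ stdSimplex ℝ (Fin n),
        (∀ u ∈ stdSimplex ℝ (Fin n), obj c lam v ≤ obj c lam u) → v = w) ∧
      ∃ β : ℝ, ∀ i, w i = max (β - c * (∑ j, w j * lam j) * lam i) 0 :=
  unique_minimizer_on_simplex_general n hn c hc lam
end

section
/- Let n ≥ 1 and λ ∈ [0,1]^n, and set N(t) = #{i : λᵢ ≤ t} and n(t) = #{i : λᵢ < t}. If N(1/2) ≥ 4/3 (equivalently, at least 2 of the λᵢ are at most 1/2), then there exists δ* ∈ (0, 1/4] such that N(2δ*) ≥ 1/(12δ*²) and n(2δ*) ≤ 1/(12δ*²). -/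
/-!
Let `δ*` be the infimum of the `δ ∈ (0, 1/4]` with `N(2δ) ≥ 1/(12δ²)`; the set contains `1/4`
and stays away from `0` because `N ≤ n` while `1/(12δ²)` blows up. Since `N(2·)` is constant just
to the right of `δ*` and `1/(12δ²)` is continuous, the inequality survives at `δ*` itself.
Just to the left of `δ*` the count `N(2δ)` equals `n(2δ*)`, so `n(2δ*) > 1/(12δ*²)` would put
points below `δ*` into the set.
-/

open Filter Topology Set

/-- `N(t) = #{i : λᵢ ≤ t}`. -/
noncomputable def bigN {n : ℕ} (lam : Fin n → ℝ) (t : ℝ) : ℕ :=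
  (Finset.univ.filter fun i : Fin n => lam i ≤ t).card

/-- `n(t) = #{i : λᵢ < t}`. -/
noncomputable def smallN {n : ℕ} (lam : Fin n → ℝ) (t : ℝ) : ℕ :=
  (Finset.univ.filter fun i : Fin n => lam i < t).card

section Counting

variable {n : ℕ} (lam : Fin n → ℝ)

theorem bigN_le (t : ℝ) : bigN lam t ≤ n :=
  (Finset.card_filter_le _ _).trans_eq (Finset.card_fin n)

theorem eventually_bigN_eq_nhdsGE (t : ℝ) : ∀ᶠ s in 𝓝[≥] t, bigN lam s = bigN lam t := by
  have key : ∀ i, ∀ᶠ s in 𝓝[≥] t, (lam i ≤ s ↔ lam i ≤ t) := by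
    intro i
    rcases le_or_gt (lam i) t with hle | hgt
    · filter_upwards [self_mem_nhdsWithin] with s (hs : t ≤ s)
      exact iff_of_true (hle.trans hs) hle
    · filter_upwards [nhdsWithin_le_nhds (eventually_lt_nhds hgt)] with s hs
      exact iff_of_false hs.not_ge hgt.not_ge
  filter_upwards [eventually_all.2 key] with s hs
  simp only [bigN, hs]

theorem eventually_bigN_eq_smallN_nhdsLT (t : ℝ) :
    ∀ᶠ s in 𝓝[<] t, bigN lam s = smallN lam t := by
  have key : ∀ i, ∀ᶠ s in 𝓝[<] t, (lam i ≤ s ↔ lam i < t) := by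
    intro i
    rcases lt_or_ge (lam i) t with hlt | hge
    · filter_upwards [nhdsWithin_le_nhds (eventually_gt_nhds hlt)] with s hs
      exact iff_of_true hs.le hlt
    · filter_upwards [self_mem_nhdsWithin] with s (hs : s < t)
      exact iff_of_false (hs.trans_le hge).not_ge hge.not_gt
  filter_upwards [eventually_all.2 key] with s hs
  simp only [bigN, smallN, hs]

theorem exists_mem_Ioc_le_bigN_smallN_le {f : ℝ → ℝ} (hf : ContinuousOn f (Ioi 0))
    (hf_zero : Tendsto f (𝓝[>] 0) atTop) {c : ℝ} (hc : 0 < c) (hfc : f c ≤ bigN lam c) :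
    ∃ t ∈ Ioc 0 c, f t ≤ bigN lam t ∧ smallN lam t ≤ f t := by
  set A := {t ∈ Ioc 0 c | f t ≤ bigN lam t}
  have hcA : c ∈ A := ⟨⟨hc, le_rfl⟩, hfc⟩
  obtain ⟨u, hu, hu_sub⟩ := mem_nhdsGT_iff_exists_Ioo_subset.1
    (hf_zero.eventually_gt_atTop (n : ℝ))
  have hA_ge : ∀ t ∈ A, u ≤ t := fun t ⟨ht, hft⟩ ↦ le_of_not_gt fun htu ↦
    (hu_sub ⟨ht.1, htu⟩ : (n : ℝ) < f t).not_ge (hft.trans (by exact_mod_cast bigN_le lam t))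
  have hglb : IsGLB A (sInf A) := isGLB_csInf ⟨c, hcA⟩ ⟨u, hA_ge⟩
  set d := sInf A
  have hd : d ∈ Ioc 0 c := ⟨hu.trans_le (hglb.2 hA_ge), hglb.1 hcA⟩
  have hfd : ContinuousAt f d := hf.continuousAt (Ioi_mem_nhds hd.1)
  refine ⟨d, hd, ?_, ?_⟩
  · by_contra! hlt
    have hfar : ∀ᶠ s in 𝓝[≥] d, (bigN lam d : ℝ) < f s :=
      nhdsWithin_le_nhds (hfd.eventually (lt_mem_nhds hlt))
    obtain ⟨s, ⟨-, hs⟩, hNs, hfs⟩ :=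
      ((hglb.frequently_mem ⟨c, hcA⟩).and_eventually
        ((eventually_bigN_eq_nhdsGE lam d).and hfar)).exists
    rw [hNs] at hs
    exact hs.not_gt hfs
  · by_contra! hlt
    have hnear : ∀ᶠ s in 𝓝[<] d, 0 < s ∧ f s < smallN lam d :=
      nhdsWithin_le_nhds ((eventually_gt_nhds hd.1).and (hfd.eventually (gt_mem_nhds hlt)))
    obtain ⟨s, (hsd : s < d), ⟨hs0, hfs⟩, hNs⟩ := (eventually_mem_nhdsWithin.and
      (hnear.and (eventually_bigN_eq_smallN_nhdsLT lam d))).exists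
    have hsA : s ∈ A := ⟨⟨hs0, hsd.le.trans hd.2⟩, hNs ▸ hfs.le⟩
    exact (hglb.1 hsA).not_gt hsd

end Counting

theorem tendsto_one_div_twelve_mul_half_sq :
    Tendsto (fun t : ℝ ↦ 1 / (12 * (t / 2) ^ 2)) (𝓝[>] 0) atTop := by
  simp only [one_div]
  refine Tendsto.inv_tendsto_nhdsGT_zero (tendsto_nhdsWithin_iff.2 ⟨?_, ?_⟩)
  · exact ((by fun_prop : Continuous fun t : ℝ ↦ 12 * (t / 2) ^ 2).tendsto' 0 0
      (by norm_num)).mono_left nhdsWithin_le_nhds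
  · filter_upwards [self_mem_nhdsWithin] with t (ht : 0 < t)
    exact (by positivity : 0 < 12 * (t / 2) ^ 2)

theorem exists_balanced_threshold_general (n : ℕ)
    (lam : Fin n → ℝ)
    (h : (4:ℝ)/3 ≤ (bigN lam (1/2) : ℝ)) :
    ∃ δ : ℝ, δ ∈ Set.Ioc (0:ℝ) (1/4) ∧
      1 / (12 * δ^2) ≤ (bigN lam (2*δ) : ℝ) ∧
      (smallN lam (2*δ) : ℝ) ≤ 1 / (12 * δ^2) := by
  have hf : ContinuousOn (fun t : ℝ ↦ 1 / (12 * (t / 2) ^ 2)) (Ioi 0) := by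
    refine continuousOn_of_forall_continuousAt fun t (ht : 0 < t) ↦ ?_
    exact continuousAt_const.div (by fun_prop) (by positivity)
  obtain ⟨t, ⟨ht0, ht⟩, hN, hn⟩ := exists_mem_Ioc_le_bigN_smallN_le lam hf
    tendsto_one_div_twelve_mul_half_sq (by norm_num : (0 : ℝ) < 1 / 2) (by norm_num [h])
  refine ⟨t / 2, ⟨by positivity, by linarith⟩, ?_, ?_⟩ <;> rwa [mul_div_cancel₀ t two_ne_zero]

/-- if `N(1/2) ≥ 4/3`, there is `δ* ∈ (0, 1/4]` with `N(2δ*) ≥ 1/(12δ*²)`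
and `n(2δ*) ≤ 1/(12δ*²)`. -/
theorem exists_balanced_threshold (n : ℕ) (hn : 1 ≤ n)
    (lam : Fin n → ℝ) (hlam : ∀ i, lam i ∈ Set.Icc (0:ℝ) 1)
    (h : (4:ℝ)/3 ≤ (bigN lam (1/2) : ℝ)) :
    ∃ δ : ℝ, δ ∈ Set.Ioc (0:ℝ) (1/4) ∧
      1 / (12 * δ^2) ≤ (bigN lam (2*δ) : ℝ) ∧
      (smallN lam (2*δ) : ℝ) ≤ 1 / (12 * δ^2) :=
  exists_balanced_threshold_general n lam h
end

section
/- Let k ≥ 1 and δ ≥ 0, let φ(u) = e^{−u²/2}/√(2π) be the standard normal density and Φ its cumulative distribution function. Then ∫_{ℝ^k} max over τ ∈ {−1,1}^k of ∏_{j=1}^k φ(xⱼ − δτⱼ) dx = (2Φ(δ))^k, and moreover (2Φ(δ))^k ≤ e^{δk}. -/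
/-!
For `δ ≥ 0` the maximum over `τ` factorises coordinatewise, and in each coordinate
`max (φ (u - δ)) (φ (u + δ)) = φ (|u| - δ)`. Hence the integral is the `k`-th power of
`∫ φ (|u| - δ) du = 2 ∫_{-δ}^∞ φ = 2 Φ(δ)`. For the bound, `φ ≤ 1/2` makes `Φ`
`1/2`-Lipschitz, so `2 Φ(δ) ≤ 2 Φ(0) + δ = 1 + δ ≤ e^δ`.
-/

noncomputable section

/-- The standard normal density `φ(u) = e^{−u²/2}/√(2π)`. -/
def stdphi (u : ℝ) : ℝ := Real.exp (-u^2/2) / Real.sqrt (2*Real.pi)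

/-- The standard normal cumulative distribution function. -/
def Phi (r : ℝ) : ℝ := ∫ u in Set.Iic r, stdphi u

open MeasureTheory Set ProbabilityTheory Finset

theorem Finset.sup'_univ_prod_eq_prod_sup' {ι β R : Type*} [Fintype ι] [DecidableEq ι]
    [Fintype β] [Nonempty β] [CommSemiring R] [LinearOrder R] [IsOrderedRing R]
    (g : ι → β → R) (hg : 0 ≤ g) :
    univ.sup' univ_nonempty (fun τ : ι → β => ∏ j, g j (τ j)) =
      ∏ j, univ.sup' univ_nonempty (g j) := by
  refine le_antisymm (sup'_le _ _ fun τ _ => ?_) ?_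
  · exact prod_le_prod (fun j _ => hg j (τ j)) fun j _ => le_sup' (g j) (mem_univ _)
  · choose τ _ hτ using fun j => exists_mem_eq_sup' univ_nonempty (g j)
    simpa only [hτ] using le_sup' (fun τ : ι → β => ∏ j, g j (τ j)) (mem_univ τ)

lemma stdphi_eq_gaussianPDFReal : stdphi = gaussianPDFReal 0 1 := by
  ext u
  simp [stdphi, gaussianPDFReal, div_eq_inv_mul]

lemma stdphi_nonneg (u : ℝ) : 0 ≤ stdphi u := by
  rw [stdphi_eq_gaussianPDFReal]; exact gaussianPDFReal_nonneg _ _ _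

lemma integrable_stdphi : Integrable stdphi := by
  rw [stdphi_eq_gaussianPDFReal]; exact integrable_gaussianPDFReal _ _

lemma integral_stdphi : ∫ u, stdphi u = 1 := by
  rw [stdphi_eq_gaussianPDFReal]; exact integral_gaussianPDFReal_eq_one _ one_ne_zero

lemma stdphi_neg (u : ℝ) : stdphi (-u) = stdphi u := by
  simp [stdphi]

lemma stdphi_le_of_sq_le {a b : ℝ} (h : a ^ 2 ≤ b ^ 2) : stdphi b ≤ stdphi a := by
  unfold stdphi; gcongr

lemma stdphi_le_half (u : ℝ) : stdphi u ≤ 1 / 2 := by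
  have h2pi : 2 ≤ √(2 * Real.pi) := (Real.le_sqrt' two_pos).2 (by nlinarith [Real.pi_gt_three])
  calc stdphi u ≤ stdphi 0 := stdphi_le_of_sq_le (by simpa using sq_nonneg u)
    _ = 1 / √(2 * Real.pi) := by simp [stdphi]
    _ ≤ 1 / 2 := by gcongr

lemma sup'_stdphi_sub_mul_sign {δ : ℝ} (hδ : 0 ≤ δ) (u : ℝ) :
    univ.sup' univ_nonempty (fun b : Bool => stdphi (u - δ * if b then 1 else -1)) =
      stdphi (|u| - δ) := by
  refine le_antisymm (sup'_le _ _ fun b _ => stdphi_le_of_sq_le ?_)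
    (le_sup'_of_le _ (mem_univ (decide (0 ≤ u))) ?_)
  · cases b <;>
      simp only [Bool.false_eq_true, if_true, if_false, mul_one, mul_neg_one, sub_neg_eq_add] <;>
      nlinarith [sq_abs u, le_abs_self u, neg_abs_le u]
  · rcases le_or_gt 0 u with hu | hu
    · simp [hu, abs_of_nonneg]
    · rw [abs_of_neg hu, ← stdphi_neg]
      simp [hu.not_ge, add_comm]

lemma setIntegral_Ioi_neg_stdphi (r : ℝ) : ∫ u in Ioi (-r), stdphi u = Phi r := by
  simp only [Phi, ← integral_comp_neg_Iic, stdphi_neg]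

lemma integral_stdphi_abs_sub (δ : ℝ) : ∫ u, stdphi (|u| - δ) = 2 * Phi δ := by
  have hshift := (measurePreserving_sub_right volume δ).setIntegral_preimage_emb
    (measurableEmbedding_subRight δ) stdphi (Ioi (-δ))
  rw [preimage_sub_const_Ioi, neg_add_cancel] at hshift
  rw [integral_comp_abs (f := fun t => stdphi (t - δ)), hshift, setIntegral_Ioi_neg_stdphi]

lemma Phi_zero : Phi 0 = 1 / 2 := by
  have h := integral_stdphi_abs_sub 0
  have habs (u : ℝ) : stdphi |u| = stdphi u := by simp [stdphi]
  simp only [sub_zero, habs, integral_stdphi] at h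
  linarith

lemma Phi_nonneg (r : ℝ) : 0 ≤ Phi r :=
  setIntegral_nonneg measurableSet_Iic fun u _ => stdphi_nonneg u

lemma abs_Phi_sub_Phi_le (a b : ℝ) : |Phi b - Phi a| ≤ |b - a| / 2 := by
  rw [Phi, Phi, intervalIntegral.integral_Iic_sub_Iic integrable_stdphi.integrableOn
    integrable_stdphi.integrableOn, div_eq_inv_mul, ← one_div]
  exact intervalIntegral.norm_integral_le_of_norm_le_const fun u _ => by
    rw [Real.norm_of_nonneg (stdphi_nonneg u)]; exact stdphi_le_half u

lemma two_mul_Phi_le_exp {δ : ℝ} (hδ : 0 ≤ δ) : 2 * Phi δ ≤ Real.exp δ := by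
  have h := (le_abs_self _).trans (abs_Phi_sub_Phi_le 0 δ)
  rw [Phi_zero, sub_zero, abs_of_nonneg hδ] at h
  linarith [Real.add_one_le_exp δ]

theorem gaussian_pointwise_max_integral_general (k : ℕ) (δ : ℝ) (hδ : 0 ≤ δ) :
    (∫ x : Fin k → ℝ,
        Finset.univ.sup' Finset.univ_nonempty
          (fun τ : Fin k → Bool =>
            ∏ j, stdphi (x j - δ * (if τ j then 1 else -1)))) = (2 * Phi δ) ^ k ∧
    (2 * Phi δ) ^ k ≤ Real.exp (δ * k) := by
  constructor
  · have hmax (x : Fin k → ℝ) :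
        univ.sup' univ_nonempty (fun τ : Fin k → Bool =>
          ∏ j, stdphi (x j - δ * (if τ j then 1 else -1))) = ∏ j, stdphi (|x j| - δ) := by
      rw [sup'_univ_prod_eq_prod_sup' (fun j (b : Bool) => stdphi (x j - δ * if b then 1 else -1))
        fun _ _ => stdphi_nonneg _]
      simp only [sup'_stdphi_sub_mul_sign hδ]
    simp only [hmax]
    rw [integral_fintype_prod_volume_eq_pow (fun u => stdphi (|u| - δ)), Fintype.card_fin,
      integral_stdphi_abs_sub]
  · calc (2 * Phi δ) ^ k ≤ Real.exp δ ^ k :=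
          pow_le_pow_left₀ (mul_nonneg zero_le_two (Phi_nonneg δ)) (two_mul_Phi_le_exp hδ) k
      _ = Real.exp (δ * k) := by rw [← Real.exp_nat_mul, mul_comm]

/-- `∫_{ℝ^k} max_{τ ∈ {−1,1}^k} ∏ⱼ φ(xⱼ − δτⱼ) dx = (2Φ(δ))^k`, and
`(2Φ(δ))^k ≤ e^{δk}`. -/
theorem gaussian_pointwise_max_integral (k : ℕ) (hk : 1 ≤ k) (δ : ℝ) (hδ : 0 ≤ δ) :
    (∫ x : Fin k → ℝ,
        Finset.univ.sup' Finset.univ_nonempty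
          (fun τ : Fin k → Bool =>
            ∏ j, stdphi (x j - δ * (if τ j then 1 else -1)))) = (2 * Phi δ) ^ k ∧
    (2 * Phi δ) ^ k ≤ Real.exp (δ * k) :=
  gaussian_pointwise_max_integral_general k δ hδ
end
end

section
/- Let d ≥ 1 and consider the family of subsets of ℝ^d × ℝ given by 𝒢 = { {(w, y) ∈ ℝ^d × ℝ : (y − ηᵀw)·(ηᵀw) ≥ 0} : η ∈ ℝ^d, η ≠ 0 }. Then every finite subset of ℝ^d × ℝ that is shattered by 𝒢 has cardinality at most 200d; that is, the VC dimension of 𝒢 is at most 200d. -/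
/-!
Writing `ℓ_η(w, y) = ηᵀw`, the set attached to `η` is `{p : 0 ≤ (y - ℓ_η p) · ℓ_η p}`, and by the sign
rule for a product its trace on a finite set `S` is `(H₁ ∩ H₂) ∪ (H₃ ∩ H₄)`, where the `Hᵢ` are
traces of the homogeneous halfspaces `{0 ≤ λ}` for the linear functionals `λ = y - ℓ_η`, `ℓ_η` and
their negatives on `ℝ^d × ℝ`. Homogeneous halfspaces in an `m`-dimensional space shatter no set of
more than `m` points (a nontrivial linear relation among the points forbids the sign pattern of its
coefficients), so by Sauer–Shelah they have at most `Φ = ∑_{k ≤ d+1} C(|S|, k)` traces on `S`. A set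
shattered by `𝒢` thus satisfies `2^|S| ≤ Φ^4`, which fails for `|S| = 200d + 1`.
-/

open Matrix Finset Module

namespace Nat

theorem sum_Iic_choose_le_add_choose (n k : ℕ) :
    ∑ i ∈ Iic k, n.choose i ≤ (n + k).choose k := by
  induction k with
  | zero => simp [← range_succ_eq_Iic]
  | succ k ih =>
    rw [← range_succ_eq_Iic, sum_range_succ, range_succ_eq_Iic, ← add_assoc, choose_succ_succ']
    exact Nat.add_le_add ih (choose_le_choose _ (by omega))

theorem pow_self_le_three_pow_mul_factorial (k : ℕ) : k ^ k ≤ 3 ^ k * k ! := by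
  have hexp : Real.exp k ≤ 3 ^ k := by
    rw [← Real.exp_one_pow]
    exact pow_le_pow_left₀ (Real.exp_pos 1).le (Real.exp_one_lt_d9.trans (by norm_num)).le k
  have hfac : (0 : ℝ) < k ! := mod_cast k.factorial_pos
  have h := (div_le_iff₀ hfac).1 (Real.pow_div_factorial_le_exp _ (Nat.cast_nonneg k) k)
  exact_mod_cast h.trans (mul_le_mul_of_nonneg_right hexp hfac.le)

theorem choose_le_three_mul_pow {n k c : ℕ} (h : n ≤ c * k) : n.choose k ≤ (3 * c) ^ k := by
  refine Nat.le_of_mul_le_mul_right ?_ k.factorial_pos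
  calc n.choose k * k ! ≤ n ^ k := by
        rw [mul_comm, ← descFactorial_eq_factorial_mul_choose]
        exact descFactorial_le_pow n k
    _ ≤ c ^ k * k ^ k := by rw [← mul_pow]; exact Nat.pow_le_pow_left h k
    _ ≤ c ^ k * (3 ^ k * k !) := Nat.mul_le_mul_left _ (pow_self_le_three_pow_mul_factorial k)
    _ = (3 * c) ^ k * k ! := by ring

end Nat

theorem sum_Iic_choose_pow_four_lt {d : ℕ} (hd : 1 ≤ d) :
    (∑ i ∈ Iic (d + 1), (200 * d + 1).choose i) ^ 4 < 2 ^ (200 * d + 1) :=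
  calc (∑ i ∈ Iic (d + 1), (200 * d + 1).choose i) ^ 4
      ≤ ((3 * 202) ^ (d + 1)) ^ 4 := by
        gcongr
        exact (Nat.sum_Iic_choose_le_add_choose _ _).trans
          (Nat.choose_le_three_mul_pow (by omega))
    _ ≤ ((2 ^ 10) ^ (d + 1)) ^ 4 := by gcongr; norm_num
    _ = 2 ^ (40 * (d + 1)) := by rw [← pow_mul, ← pow_mul]; ring_nf
    _ < 2 ^ (200 * d + 1) := Nat.pow_lt_pow_right (by norm_num) (by omega)

section Halfspaces

variable {ι α V : Type*} [AddCommGroup V] [Module ℝ V]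

theorem card_le_finrank_of_forall_halfspace [FiniteDimensional ℝ V] (v : ι → V) (s : Finset ι)
    (h : ∀ t ⊆ s, ∃ f : Dual ℝ V, ∀ i ∈ s, i ∈ t ↔ 0 ≤ f (v i)) :
    #s ≤ finrank ℝ V := by
  by_contra! hlt
  have hdep : ¬LinearIndepOn ℝ v (s : Set ι) := fun hv =>
    hlt.not_ge (by simpa using hv.fintype_card_le_finrank)
  obtain ⟨c, hc, i₀, hi₀, hc₀⟩ : ∃ c : ι → ℝ, ∑ i ∈ s, c i • v i = 0 ∧ ∃ i ∈ s, 0 < c i := by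
    obtain ⟨c, hc, i₀, hi₀, hc₀⟩ := not_linearIndepOn_finset_iff.1 hdep
    rcases hc₀.lt_or_gt with hneg | hpos
    · exact ⟨-c, by simp [neg_smul, sum_neg_distrib, hc], i₀, hi₀, by simpa using hneg⟩
    · exact ⟨c, hc, i₀, hi₀, hpos⟩
  obtain ⟨f, hf⟩ := h (s.filter (c · < 0)) (filter_subset _ _)
  have hsign : ∀ i ∈ s, (0 ≤ c i ↔ f (v i) < 0) := fun i hi => by
    simpa [hi, not_lt] using (hf i hi).not
  have hneg : ∑ i ∈ s, c i * f (v i) < 0 := by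
    refine sum_neg' (fun i hi => ?_) ⟨i₀, hi₀, mul_neg_of_pos_of_neg hc₀ ((hsign i₀ hi₀).1 hc₀.le)⟩
    rcases le_or_gt 0 (c i) with hci | hci
    · exact mul_nonpos_of_nonneg_of_nonpos hci ((hsign i hi).1 hci).le
    · exact mul_nonpos_of_nonpos_of_nonneg hci.le (le_of_not_gt ((hsign i hi).not.1 hci.not_ge))
  have hzero : ∑ i ∈ s, c i * f (v i) = 0 := by
    simpa only [map_sum, map_smul, smul_eq_mul, map_zero] using congrArg f hc
  exact hneg.ne hzero

variable [Fintype α]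

open Classical in
noncomputable def halfspaceTraces (v : α → V) : Finset (Finset α) :=
  univ.filter fun u => ∃ f : Dual ℝ V, ∀ a, a ∈ u ↔ 0 ≤ f (v a)

theorem mem_halfspaceTraces {v : α → V} {u : Finset α} :
    u ∈ halfspaceTraces v ↔ ∃ f : Dual ℝ V, ∀ a, a ∈ u ↔ 0 ≤ f (v a) := by
  simp [halfspaceTraces]

theorem filter_mem_halfspaceTraces (v : α → V) (f : Dual ℝ V) :
    univ.filter (fun a => 0 ≤ f (v a)) ∈ halfspaceTraces v :=
  mem_halfspaceTraces.2 ⟨f, fun a => by simp⟩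

variable [FiniteDimensional ℝ V]

theorem vcDim_halfspaceTraces_le [DecidableEq α] (v : α → V) :
    (halfspaceTraces v).vcDim ≤ finrank ℝ V := by
  refine Finset.sup_le fun s hs => card_le_finrank_of_forall_halfspace v s fun t ht => ?_
  obtain ⟨u, hu, rfl⟩ := (mem_shatterer.1 hs) ht
  obtain ⟨f, hf⟩ := mem_halfspaceTraces.1 hu
  exact ⟨f, fun a ha => by simp [ha, hf]⟩

theorem card_halfspaceTraces_le (v : α → V) :
    #(halfspaceTraces v) ≤ ∑ k ∈ Iic (finrank ℝ V), (Fintype.card α).choose k := by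
  classical
  calc #(halfspaceTraces v) ≤ #(halfspaceTraces v).shatterer := card_le_card_shatterer _
    _ ≤ ∑ k ∈ Iic (halfspaceTraces v).vcDim, (Fintype.card α).choose k :=
      card_shatterer_le_sum_vcDim
    _ ≤ _ := sum_le_sum_of_subset (Iic_subset_Iic.2 (vcDim_halfspaceTraces_le v))

theorem two_pow_card_le_of_forall_mul_nonneg (v : α → V)
    (h : ∀ t : Finset α, ∃ f g : Dual ℝ V, ∀ a, a ∈ t ↔ 0 ≤ f (v a) * g (v a)) :
    2 ^ Fintype.card α ≤ (∑ k ∈ Iic (finrank ℝ V), (Fintype.card α).choose k) ^ 4 := by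
  classical
  set 𝒜 := halfspaceTraces v
  have hcover : (univ : Finset (Finset α)) ⊆
      (𝒜 ×ˢ 𝒜 ×ˢ 𝒜 ×ˢ 𝒜).image fun p => p.1 ∩ p.2.1 ∪ p.2.2.1 ∩ p.2.2.2 := by
    intro t _
    obtain ⟨f, g, hfg⟩ := h t
    let H : Dual ℝ V → Finset α := fun f => univ.filter fun a => 0 ≤ f (v a)
    refine mem_image.2 ⟨(H f, H g, H (-f), H (-g)), ?_, ?_⟩
    · simp only [mem_product, H, 𝒜, filter_mem_halfspaceTraces, and_self]
    · ext a
      simp [H, hfg a, mul_nonneg_iff]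
  calc 2 ^ Fintype.card α = #(univ : Finset (Finset α)) := by simp
    _ ≤ #(𝒜 ×ˢ 𝒜 ×ˢ 𝒜 ×ˢ 𝒜) := (card_le_card hcover).trans card_image_le
    _ = #𝒜 ^ 4 := by simp only [card_product]; ring
    _ ≤ _ := by gcongr; exact card_halfspaceTraces_le v

end Halfspaces

/-- the family
`𝒢 = { {(w,y) : (y − ηᵀw)(ηᵀw) ≥ 0} : η ∈ ℝ^d, η ≠ 0 }` of subsets of `ℝ^d × ℝ`
has VC dimension at most `200d`: every finite subset of `ℝ^d × ℝ` shattered by `𝒢` has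
cardinality at most `200d`. -/
theorem regression_depth_class_vc_bound (d : ℕ) (hd : 1 ≤ d)
    (Sfin : Finset ((Fin d → ℝ) × ℝ))
    (hshatter : ∀ T ⊆ Sfin, ∃ η : Fin d → ℝ, η ≠ 0 ∧
      ∀ p ∈ Sfin, (p ∈ T ↔ 0 ≤ (p.2 - η ⬝ᵥ p.1) * (η ⬝ᵥ p.1))) :
    Sfin.card ≤ 200 * d := by
  by_contra! hcard
  obtain ⟨S, hS, hScard⟩ := exists_subset_card_eq (show 200 * d + 1 ≤ #Sfin by omega)
  have hsubsets : ∀ t : Finset S, ∃ f g : Dual ℝ ((Fin d → ℝ) × ℝ),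
      ∀ p : S, p ∈ t ↔ 0 ≤ f p * g p := fun t => by
    obtain ⟨η, -, hη⟩ := hshatter (t.map (Function.Embedding.subtype _))
      fun _ hp => hS (property_of_mem_map_subtype t hp)
    let ℓ : Dual ℝ ((Fin d → ℝ) × ℝ) := dotProductBilin ℝ ℝ η ∘ₗ LinearMap.fst ℝ _ ℝ
    refine ⟨LinearMap.snd ℝ _ ℝ - ℓ, ℓ, fun p => ?_⟩
    simpa [ℓ] using hη p (hS p.2)
  have key := two_pow_card_le_of_forall_mul_nonneg Subtype.val hsubsets
  simp only [Fintype.card_coe, hScard, finrank_prod, finrank_fin_fun, finrank_self] at key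
  exact (sum_Iic_choose_pow_four_lt hd).not_ge key
end
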